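/- Let a, b be real numbers with a ≥ 0, b ≥ 0 and a ≠ b, and let C = t² + 1 + ε(a𝐢 + b𝐣t) ∈ 𝔻ℍ[t] (the curvilinear translation along an ellipse with semi-axis lengths a and b). Then C is a motion polynomial, but there exist no dual quaternions h₁, h₂ such that t − h₁ and t − h₂ are motion polynomials and C = (t − h₁)(t − h₂). -/

import Mathlib

noncomputable section
open Polynomial

/-- The real quaternions ℍ. -/
abbrev Quat := Quaternion ℝ

/-- The dual quaternions 𝔻ℍ = ℍ ⊕ εℍ, realized as dual numbers over ℍ.
An element is a pair `(p, q)` representing `p + εq`. -/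
abbrev DQ := DualNumber Quat

/-- Conjugation of a dual quaternion `p + εq ↦ p̄ + εq̄`,
conjugating each quaternion part. -/
def dconj (h : DQ) : DQ := (star h.fst, star h.snd)

/-- The canonical ring homomorphism ℝ → 𝔻ℍ. -/
def realToDQ : ℝ →+* DQ := (TrivSqZeroExt.inlHom Quat Quat).comp (algebraMap ℝ Quat)

/-- Coefficientwise conjugate of a polynomial over 𝔻ℍ. -/
def pconj (C : DQ[X]) : DQ[X] := C.sum fun n a => Polynomial.C (dconj a) * X ^ n

/-- `C ∈ 𝔻ℍ[t]` is a motion polynomial if `C C̄ ∈ ℝ[t] \ {0}` and the leading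
coefficient of `C` is invertible. -/
def IsMotionPoly (C : DQ[X]) : Prop :=
  (∃ R : ℝ[X], R ≠ 0 ∧ C * pconj C = R.map realToDQ) ∧ IsUnit C.leadingCoeff

/-- The action of a dual quaternion `p + εq` (with `p ≠ 0` and satisfying the Study
condition) on a pure quaternion `x`:  `x ↦ (p x p̄ + p q̄ − q p̄)/N(p)`. -/
def act (p q x : Quat) : Quat :=
  (p * x * star p + p * star q - q * star p) * (p * star p)⁻¹

/-- The dual quaternion `p + εq` from its primal part `p` and dual part `q`. -/
def dq (p q : Quat) : DQ := (p, q)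

/-- The imaginary unit 𝐢 of ℍ. -/
def qi : Quat := ⟨0, 1, 0, 0⟩
/-- The imaginary unit 𝐣 of ℍ. -/
def qj : Quat := ⟨0, 0, 1, 0⟩
/-- The imaginary unit 𝐤 of ℍ. -/
def qk : Quat := ⟨0, 0, 0, 1⟩

/-!
Write `C = (t² + 1) + B` with `B = ε(u + v t)` and `u, v` pure quaternions.
Then `B̄ = -B`, `B² = 0` and `t² + 1` is real, so `C C̄ = (t² + 1)²`.

If `C = (t - h₁)(t - h₂)` with `hᵢ = pᵢ + εqᵢ`, the primal parts give `p₂ = -p₁`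
and `p₁² = -1`, so `p₁` is a unit pure quaternion. That `t - h₁` is a motion polynomial
makes `h₁ + h̄₁` and `h₁ h̄₁` real, i.e. `q₁` is pure and anticommutes with `p₁`.
The dual parts then give `u = p₁ q₂ - q₁ p₁ = p₁ (q₁ + q₂) = -p₁ v`, and taking norms
`a² = |u|² = |v|² = b²`.
-/

open TrivSqZeroExt
open Quaternion (normSq)

lemma fst_dconj (h : DQ) : (dconj h).fst = star h.fst := rfl

lemma snd_dconj (h : DQ) : (dconj h).snd = star h.snd := rfl

lemma dconj_zero : dconj 0 = 0 := by
  ext <;> simp [fst_dconj, snd_dconj]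

lemma dconj_add (x y : DQ) : dconj (x + y) = dconj x + dconj y := by
  ext <;> simp [fst_dconj, snd_dconj]

lemma dconj_neg (x : DQ) : dconj (-x) = -dconj x := by
  ext <;> simp [fst_dconj, snd_dconj]

lemma dconj_one : dconj 1 = 1 := by
  ext <;> simp [fst_dconj, snd_dconj]

lemma dq_zero (u : Quat) : dq 0 u = inr u := rfl

lemma dconj_inr (u : Quat) : dconj (inr u) = inr (star u) := by
  ext <;> simp [fst_dconj, snd_dconj]

lemma snd_realToDQ (r : ℝ) : (realToDQ r).snd = 0 := rfl

lemma coeff_pconj (P : DQ[X]) (n : ℕ) : (pconj P).coeff n = dconj (P.coeff n) := by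
  rw [pconj, coeff_sum, sum_def]
  simp only [coeff_C_mul_X_pow]
  rw [Finset.sum_ite_eq]
  split_ifs with hn
  · rfl
  · rw [notMem_support_iff.mp hn, dconj_zero]

section Quadratic

variable {R : Type*} [Ring R]

lemma X_sub_C_mul_X_sub_C (u v : R) :
    (X - C u) * (X - C v) = X ^ 2 - C (u + v) * X + C (u * v) := by
  rw [sub_mul, mul_sub, mul_sub, X_mul (p := C v), ← C_mul, ← sq, C_add, add_mul]
  abel

lemma coeff_X_sq_sub_C_mul_X_add_C_one (a b : R) : (X ^ 2 - C a * X + C b).coeff 1 = -a := by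
  simp [coeff_C]

lemma coeff_X_sq_sub_C_mul_X_add_C_zero (a b : R) : (X ^ 2 - C a * X + C b).coeff 0 = b := by
  simp [coeff_X, coeff_C]

lemma eq_and_eq_of_X_sq_sub_C_mul_X_add_C_eq {a b a' b' : R}
    (h : X ^ 2 - C a * X + C b = X ^ 2 - C a' * X + C b') : a = a' ∧ b = b' := by
  have h1 := congrArg (coeff · 1) h
  have h0 := congrArg (coeff · 0) h
  simp only [coeff_X_sq_sub_C_mul_X_add_C_one, coeff_X_sq_sub_C_mul_X_add_C_zero, neg_inj]
    at h1 h0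
  exact ⟨h1, h0⟩

end Quadratic

lemma pconj_X_sub_C (h : DQ) : pconj (X - C h) = X - C (dconj h) := by
  ext1 n
  rcases n with _ | _ | n <;> simp [coeff_pconj, coeff_X, coeff_C, dconj_zero, dconj_neg, dconj_one]

lemma IsMotionPoly.exists_real_of_X_sub_C {h : DQ} (hM : IsMotionPoly (X - C h)) :
    ∃ r s : ℝ, h + dconj h = realToDQ r ∧ h * dconj h = realToDQ s := by
  obtain ⟨⟨R, -, hR⟩, -⟩ := hM
  rw [pconj_X_sub_C, X_sub_C_mul_X_sub_C] at hR
  have h1 := congrArg (coeff · 1) hR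
  have h0 := congrArg (coeff · 0) hR
  simp only [coeff_X_sq_sub_C_mul_X_add_C_one, coeff_X_sq_sub_C_mul_X_add_C_zero,
    coeff_map] at h1 h0
  exact ⟨-R.coeff 1, R.coeff 0, by rw [map_neg, ← h1, neg_neg], h0⟩

lemma isMotionPoly_X_sq_add_one_add {u v : Quat} (hu : star u = -u) (hv : star v = -v) :
    IsMotionPoly (X ^ 2 + 1 + C (dq 0 u) + C (dq 0 v) * X) := by
  have hC : X ^ 2 + 1 + C (dq 0 u) + C (dq 0 v) * X
      = X ^ 2 + 1 + (C (inr u) + C (inr v) * X) := by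
    rw [add_assoc, dq_zero, dq_zero]
  set B : DQ[X] := C (inr u) + C (inr v) * X
  have hpconj : pconj (X ^ 2 + 1 + B) = X ^ 2 + 1 - B := by
    ext1 n
    rcases n with _ | _ | _ | n <;>
      simp [B, coeff_pconj, coeff_X, coeff_one, coeff_C, dconj_zero, dconj_one, dconj_add,
        dconj_inr, hu, hv, sub_eq_add_neg, -DualNumber.inr_eq_smul_eps]
  have hBB : B * B = 0 := by
    simp only [B, add_mul, mul_add, ← X_mul, ← mul_assoc]
    simp only [mul_assoc, ← C_mul, inr_mul_inr, C_0, mul_zero, add_zero]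
  have hcomm : Commute (X ^ 2 + 1) B :=
    ((commute_X B).pow_left 2).add_left (Commute.one_left B)
  refine ⟨⟨(X ^ 2 + 1) ^ 2, ((monic_X_pow_add_C 1 two_ne_zero).pow 2).ne_zero, ?_⟩, ?_⟩
  · rw [hC, hpconj, ← hcomm.mul_self_sub_mul_self_eq, hBB, sub_zero]
    simp [sq]
  · rw [(by monicity! : (X ^ 2 + 1 + C (dq 0 u) + C (dq 0 v) * X : DQ[X]).Monic).leadingCoeff]
    exact isUnit_one

lemma Quaternion.re_eq_zero_of_mul_self_eq_neg_one {p : Quat} (h : p * p = -1) : p.re = 0 := by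
  have hre := congrArg QuaternionAlgebra.re h
  have hI := congrArg QuaternionAlgebra.imI h
  have hJ := congrArg QuaternionAlgebra.imJ h
  have hK := congrArg QuaternionAlgebra.imK h
  simp at hre hI hJ hK
  have key : p.re * (p.re ^ 2 + 1) = 0 := by
    linear_combination p.re * hre + (p.imI / 2) * hI + (p.imJ / 2) * hJ + (p.imK / 2) * hK
  exact (mul_eq_zero.mp key).resolve_right (by positivity)

lemma Quaternion.normSq_eq_one_of_mul_self_eq_neg_one {p : Quat} (h : p * p = -1) :
    normSq p = 1 := by
  have hstar : star p = -p := Quaternion.star_eq_neg.mpr (re_eq_zero_of_mul_self_eq_neg_one h)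
  have := Quaternion.self_mul_star p
  rw [hstar, mul_neg, h, neg_neg] at this
  exact Quaternion.coe_injective this.symm

lemma IsMotionPoly.snd_mul_eq_fst_mul_snd_add {h₁ h₂ : DQ} (hM : IsMotionPoly (X - C h₁))
    (hsq : h₁.fst * h₁.fst = -1) (hfst : h₂.fst = -h₁.fst) :
    (h₁ * h₂).snd = h₁.fst * (h₁ + h₂).snd := by
  obtain ⟨r, s, hr, hs⟩ := hM.exists_real_of_X_sub_C
  have hr_snd := congrArg snd hr
  have hs_snd := congrArg snd hs
  simp only [snd_add, snd_mul, fst_dconj, snd_dconj, snd_realToDQ, smul_eq_mul,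
    op_smul_eq_mul] at hr_snd hs_snd ⊢
  have hstar_p : star h₁.fst = -h₁.fst :=
    Quaternion.star_eq_neg.mpr (Quaternion.re_eq_zero_of_mul_self_eq_neg_one hsq)
  have hstar_q : star h₁.snd = -h₁.snd := eq_neg_of_add_eq_zero_right hr_snd
  have hanti : h₁.snd * h₁.fst = -(h₁.fst * h₁.snd) := by
    rw [hstar_p, hstar_q, mul_neg, mul_neg, ← neg_add, neg_eq_zero] at hs_snd
    exact eq_neg_of_add_eq_zero_right hs_snd
  rw [hfst, mul_neg, hanti, neg_neg, mul_add, add_comm]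

lemma IsMotionPoly.normSq_eq_of_factorization {u v : Quat} {h₁ h₂ : DQ}
    (hM : IsMotionPoly (X - C h₁))
    (hC : X ^ 2 + 1 + C (dq 0 u) + C (dq 0 v) * X = (X - C h₁) * (X - C h₂)) :
    normSq u = normSq v := by
  have hC' :
      X ^ 2 - C (-inr v) * X + C (1 + inr u) = X ^ 2 - C (h₁ + h₂) * X + C (h₁ * h₂) := by
    rw [← X_sub_C_mul_X_sub_C, ← hC, dq_zero, dq_zero, map_neg, map_add, map_one,
      neg_mul (C (inr v : DQ)) X, sub_neg_eq_add]
    abel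
  obtain ⟨hsum, hprod⟩ := eq_and_eq_of_X_sq_sub_C_mul_X_add_C_eq hC'
  have hfst : h₂.fst = -h₁.fst :=
    eq_neg_of_add_eq_zero_right (by simpa using (congrArg fst hsum).symm)
  have hsq : h₁.fst * h₁.fst = -1 :=
    neg_eq_iff_eq_neg.mp (by simpa [hfst] using (congrArg fst hprod).symm)
  have hu : u = h₁.fst * -v := by
    simpa [← hsum, ← hprod] using hM.snd_mul_eq_fst_mul_snd_add hsq hfst
  rw [hu, map_mul, Quaternion.normSq_eq_one_of_mul_self_eq_neg_one hsq, one_mul,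
    Quaternion.normSq_neg]

lemma star_qi : star qi = -qi := Quaternion.star_eq_neg.mpr rfl

lemma star_qj : star qj = -qj := Quaternion.star_eq_neg.mpr rfl

lemma normSq_qi : normSq qi = 1 := by
  rw [Quaternion.normSq_def']; simp [qi]

lemma normSq_qj : normSq qj = 1 := by
  rw [Quaternion.normSq_def']; simp [qj]

/-- For a, b ≥ 0 with a ≠ b, the polynomial
`C = t² + 1 + ε(a𝐢 + b𝐣t)` (curvilinear translation along an ellipse with
semi-axes a and b) is a motion polynomial, but admits no factorization
`C = (t − h₁)(t − h₂)` into monic linear motion polynomials. -/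
theorem stmt16 (a b : ℝ) (ha : 0 ≤ a) (hb : 0 ≤ b) (hab : a ≠ b) :
    IsMotionPoly
      (X ^ 2 + 1 + Polynomial.C (dq 0 (a • qi)) + Polynomial.C (dq 0 (b • qj)) * X) ∧
    ¬ ∃ h₁ h₂ : DQ,
        IsMotionPoly (X - Polynomial.C h₁) ∧ IsMotionPoly (X - Polynomial.C h₂) ∧
        X ^ 2 + 1 + Polynomial.C (dq 0 (a • qi)) + Polynomial.C (dq 0 (b • qj)) * X
          = (X - Polynomial.C h₁) * (X - Polynomial.C h₂) := by
  have hi : star (a • qi) = -(a • qi) := by rw [Quaternion.star_smul, star_qi, smul_neg]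
  have hj : star (b • qj) = -(b • qj) := by rw [Quaternion.star_smul, star_qj, smul_neg]
  refine ⟨isMotionPoly_X_sq_add_one_add hi hj, ?_⟩
  rintro ⟨h₁, h₂, hM₁, -, hC⟩
  have hnorm := hM₁.normSq_eq_of_factorization hC
  rw [Quaternion.normSq_smul, Quaternion.normSq_smul, normSq_qi, normSq_qj, mul_one, mul_one]
    at hnorm
  exact hab ((sq_eq_sq₀ ha hb).mp hnorm)
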